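/- arXiv:2408.01261 — 5 statements merged into one kernel-verified Lean document; each statement's English description precedes it below -/
import Mathlib

section
/- Let Y be countably infinite, G = (⊕_{x∈ℕ}ℤ₂)^Y acting coordinatewise on (2^ℕ)^Y, Γ ≤ G the subgroup of elements with all but finitely many coordinates the identity. Let D ⊆ (2^ℕ)^Y be dense open and ζ ∈ (2^ℕ)^Y. Assume that for every finite Y₀ ⊆ Y and every γ ∈ Γ, the fiber D_{γ·ζ↾Y₀} = {b ∈ (2^ℕ)^{Y∖Y₀} : (γ·ζ↾Y₀, b) ∈ D} is nonempty. Then {g ∈ G : g·ζ ∈ D} is dense open in G. -/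
/-!
Openness holds because `g ↦ g·ζ` is continuous. For density, a basic open set of `G` fixes
finitely many coordinates `Y₀` of some `g₀`; the fiber hypothesis gives `b ∈ D` agreeing with
`g₀·ζ` on `Y₀`. Since finitely supported sequences are dense in `2^ℕ`, the images `g·ζ` of the
`g` agreeing with `g₀` on `Y₀` accumulate at `b`, so one of them lies in the open set `D`.
-/

/-- The group `⊕_{n∈ℕ}ℤ₂` of finitely supported sequences, with the discrete topology. -/
local instance : TopologicalSpace (ℕ →₀ ZMod 2) := ⊥

open Set Filter Topology

theorem Finsupp.denseRange_coeFn {ι M : Type*} [Zero M] [TopologicalSpace M] :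
    DenseRange (fun f : ι →₀ M => ⇑f) := by
  classical
  intro x
  have htendsto :
      Tendsto (fun s : Finset ι => ⇑(Finsupp.indicator s fun i _ => x i)) atTop (𝓝 x) := by
    refine tendsto_pi_nhds.2 fun i => tendsto_const_nhds.congr' ?_
    filter_upwards [eventually_ge_atTop {i}] with s hs
    simp [Finsupp.indicator_apply, Finset.singleton_subset_iff.1 hs]
  exact mem_closure_of_tendsto htendsto (Eventually.of_forall fun s => mem_range_self _)

theorem mem_closure_piMap_image_pi_singleton {ι : Type*} {X Z : ι → Type*}
    [∀ i, TopologicalSpace (Z i)] {f : ∀ i, X i → Z i} (hf : ∀ i, DenseRange (f i))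
    (I : Set ι) (x : ∀ i, X i) {z : ∀ i, Z i} (hz : ∀ i ∈ I, z i = f i (x i)) :
    z ∈ closure (Pi.map f '' I.pi fun i => {x i}) := by
  classical
  rw [← univ_pi_piecewise_univ, piMap_image_univ_pi, mem_closure_pi]
  intro i _
  by_cases hi : i ∈ I
  · simp only [hi, piecewise_eq_of_mem, image_singleton, hz i hi]
    exact subset_closure rfl
  · simpa [hi] using hf i (z i)

theorem exists_finset_pi_singleton_subset {ι : Type*} {X : ι → Type*}
    [∀ i, TopologicalSpace (X i)] [∀ i, DiscreteTopology (X i)] {U : Set (∀ i, X i)}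
    (hU : IsOpen U) {x : ∀ i, X i} (hx : x ∈ U) :
    ∃ I : Finset ι, (I : Set ι).pi (fun i => {x i}) ⊆ U := by
  obtain ⟨I, u, hxu, hIu⟩ := isOpen_pi_iff.1 hU x hx
  refine ⟨I, Subset.trans (pi_mono fun i hi => ?_) hIu⟩
  exact singleton_subset_iff.2 (hxu i hi).2

theorem permutation_lemma_dense_open_general {Y : Type*}
    (D : Set (Y → ℕ → ZMod 2)) (hDopen : IsOpen D)
    (ζ : Y → ℕ → ZMod 2)
    (hfib : ∀ (Y₀ : Finset Y) (γ : Y → ℕ →₀ ZMod 2), {y | γ y ≠ 0}.Finite →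
      ∃ b ∈ D, ∀ y ∈ Y₀, b y = fun i => γ y i + ζ y i) :
    IsOpen {g : Y → ℕ →₀ ZMod 2 | (fun y i => g y i + ζ y i) ∈ D} ∧
    Dense {g : Y → ℕ →₀ ZMod 2 | (fun y i => g y i + ζ y i) ∈ D} := by
  classical
  have : DiscreteTopology (ℕ →₀ ZMod 2) := ⟨rfl⟩
  let act : Y → (ℕ →₀ ZMod 2) → ℕ → ZMod 2 := fun y f => ⇑f + ζ y
  have hact : ∀ y, DenseRange (act y) := fun y =>
    (Homeomorph.addRight (ζ y)).surjective.denseRange.comp Finsupp.denseRange_coeFn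
      (Homeomorph.addRight (ζ y)).continuous
  refine ⟨hDopen.preimage (Continuous.piMap fun y => continuous_of_discreteTopology (f := act y)),
    ?_⟩
  refine dense_iff_inter_open.2 fun U hU ⟨g₀, hg₀⟩ => ?_
  obtain ⟨I, hIU⟩ := exists_finset_pi_singleton_subset hU hg₀
  obtain ⟨b, hbD, hb⟩ := hfib I ((I : Set Y).piecewise g₀ 0) (I.finite_toSet.subset fun y hy => by
    by_contra hyI
    exact hy (piecewise_eq_of_notMem _ _ _ hyI))
  have hbcl := mem_closure_piMap_image_pi_singleton hact I g₀ (z := b) fun y hy => by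
    rw [hb y hy, piecewise_eq_of_mem _ _ _ hy]; rfl
  obtain ⟨_, hgD, g, hgI, rfl⟩ := mem_closure_iff.1 hbcl D hDopen hbD
  exact ⟨g, hIU hgI, hgD⟩

/-- Permutation lemma (dense open case): if `D ⊆ (2^ℕ)^Y` is dense open, `ζ ∈ (2^ℕ)^Y`,
and for every finite `Y₀ ⊆ Y` and every finite-support `γ ∈ Γ ≤ G = (⊕ℤ₂)^Y` the fiber of
`D` over `γ·ζ↾Y₀` is nonempty, then `{g ∈ G : g·ζ ∈ D}` is dense open in `G`. -/
theorem permutation_lemma_dense_open {Y : Type*} [Countable Y] [Infinite Y]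
    (D : Set (Y → ℕ → ZMod 2)) (hDopen : IsOpen D) (hDdense : Dense D)
    (ζ : Y → ℕ → ZMod 2)
    (hfib : ∀ (Y₀ : Finset Y) (γ : Y → ℕ →₀ ZMod 2), {y | γ y ≠ 0}.Finite →
      ∃ b ∈ D, ∀ y ∈ Y₀, b y = fun i => γ y i + ζ y i) :
    IsOpen {g : Y → ℕ →₀ ZMod 2 | (fun y i => g y i + ζ y i) ∈ D} ∧
    Dense {g : Y → ℕ →₀ ZMod 2 | (fun y i => g y i + ζ y i) ∈ D} :=
  permutation_lemma_dense_open_general D hDopen ζ hfib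
end

section
/- There is a Borel (indeed continuous) map f : 2^ℕ → 2^ℕ that is a homomorphism from E₀ to E₀ such that for any comeager C ⊆ 2^ℕ × 2^ℕ one can choose f with: x ¬E₀ y implies (f(x), f(y)) ∈ C. -/
/-!
`f x` is the concatenation `w 0 (x 0) ++ w 1 (x 1) ++ ⋯` of nonempty blocks with
`(w m false).length = (w m true).length`. Since block lengths do not depend on `x`, if `x` and `y`
agree from `N` on then `f x` and `f y` agree after the first `N` blocks, so `f` is an
`E₀`-homomorphism. Write `C ⊇ ⋂ D k` with `D k` open dense and let `U m = ⋂ k ≤ m, D k`. Only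
finitely many words `u, v` can precede block `m`, so finitely many extensions inside the open dense
set `U m ∩ swap⁻¹ U m` give a pair of blocks with `(u ++ w m i, v ++ w m j)` always landing in
`U m` for `i ≠ j`. If `¬ x E₀ y`, then `x m ≠ y m` for arbitrarily large `m`, hence
`(f x, f y) ∈ U m` for arbitrarily large `m`, i.e. `(f x, f y) ∈ ⋂ D k ⊆ C`.
-/

/-- Eventual equality on Cantor space `2^ℕ`. -/
def E0 (x y : ℕ → Bool) : Prop := ∃ N, ∀ n ≥ N, x n = y n

open Set Filter Topology PiNat

section Cylinders

variable {E : ℕ → Type*} [∀ n, TopologicalSpace (E n)] [∀ n, DiscreteTopology (E n)]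

theorem PiNat.eventually_cylinder_subset {x : ∀ n, E n} {s : Set (∀ n, E n)} (hs : s ∈ 𝓝 x) :
    ∀ᶠ n in atTop, cylinder x n ⊆ s := by
  obtain ⟨-, ⟨y, n, rfl⟩, hx, hsub⟩ := (isTopologicalBasis_cylinders E).mem_nhds_iff.1 hs
  rw [← mem_cylinder_iff_eq.1 hx] at hsub
  exact eventually_atTop.2 ⟨n, fun m hm => (cylinder_anti x hm).trans hsub⟩

theorem PiNat.continuous_of_forall_exists_cylinder {ι α : Type*} [TopologicalSpace α]
    {f : (∀ n, E n) → ι → α} (hf : ∀ i, ∃ N, ∀ x, ∀ y ∈ cylinder x N, f y i = f x i) :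
    Continuous f :=
  continuous_pi fun i => IsLocallyConstant.continuous <|
    (IsLocallyConstant.iff_eventually_eq _).2 fun x =>
      let ⟨N, hN⟩ := hf i
      mem_of_superset ((isOpen_cylinder E x N).mem_nhds (self_mem_cylinder x N)) (hN x)

end Cylinders

theorem List.IsPrefix.getD_eq {α : Type*} {l l' : List α} (h : l <+: l') {i : ℕ}
    (hi : i < l.length) (d : α) : l'.getD i d = l.getD i d := by
  rw [List.getD_eq_getElem _ _ hi, List.getD_eq_getElem _ _ (hi.trans_le h.length_le),
    h.getElem hi]

namespace Cantor

def prefixCylinder (l : List Bool) : Set (ℕ → Bool) :=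
  cylinder (fun i => l.getD i false) l.length

theorem mem_prefixCylinder {l : List Bool} {y : ℕ → Bool} :
    y ∈ prefixCylinder l ↔ ∀ i < l.length, y i = l.getD i false :=
  mem_cylinder_iff

theorem isOpen_prefixCylinder (l : List Bool) : IsOpen (prefixCylinder l) :=
  isOpen_cylinder _ _ _

theorem prefixCylinder_nonempty (l : List Bool) : (prefixCylinder l).Nonempty :=
  ⟨_, self_mem_cylinder _ _⟩

theorem prefixCylinder_anti {l l' : List Bool} (h : l <+: l') :
    prefixCylinder l' ⊆ prefixCylinder l := fun y hy =>
  mem_prefixCylinder.2 fun i hi => by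
    rw [mem_prefixCylinder.1 hy i (hi.trans_le h.length_le), h.getD_eq hi false]

theorem prefixCylinder_map_range (x : ℕ → Bool) (n : ℕ) :
    prefixCylinder ((List.range n).map x) = cylinder x n := by
  ext y
  simp +contextual [mem_prefixCylinder, mem_cylinder_iff]

theorem prefix_map_range_of_mem {l : List Bool} {x : ℕ → Bool} (hx : x ∈ prefixCylinder l)
    {n : ℕ} (hn : l.length ≤ n) : l <+: (List.range n).map x := by
  rw [List.prefix_iff_eq_take, ← List.map_take, List.take_range, min_eq_left hn]
  refine List.ext_getElem (by simp) fun i hi _ => ?_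
  rw [List.getElem_map, List.getElem_range, mem_prefixCylinder.1 hx i hi, List.getD_eq_getElem]

variable {U : Set ((ℕ → Bool) × (ℕ → Bool))}

theorem exists_prefix_prod_subset (hUo : IsOpen U) (hUd : Dense U) (a b : List Bool) :
    ∃ a' b', a <+: a' ∧ b <+: b' ∧ prefixCylinder a' ×ˢ prefixCylinder b' ⊆ U := by
  obtain ⟨⟨x, y⟩, ⟨hxa, hyb⟩, hxy⟩ := hUd.inter_open_nonempty _
    ((isOpen_prefixCylinder a).prod (isOpen_prefixCylinder b))
    ((prefixCylinder_nonempty a).prod (prefixCylinder_nonempty b))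
  obtain ⟨s, hs, t, ht, hst⟩ := mem_nhds_prod_iff.1 (hUo.mem_nhds hxy)
  obtain ⟨n, hxs, hyt, ha, hb⟩ := ((eventually_cylinder_subset hs).and
    ((eventually_cylinder_subset ht).and
      ((eventually_ge_atTop a.length).and (eventually_ge_atTop b.length)))).exists
  refine ⟨(List.range n).map x, (List.range n).map y, prefix_map_range_of_mem hxa ha,
    prefix_map_range_of_mem hyb hb, ?_⟩
  rw [prefixCylinder_map_range, prefixCylinder_map_range]
  exact (prod_mono hxs hyt).trans hst

theorem exists_forall_prod_prefixCylinder_subset (hUo : IsOpen U) (hUd : Dense U)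
    {s : Set (List Bool × List Bool)} (hs : s.Finite) :
    ∃ p q : List Bool, ∀ uv ∈ s, prefixCylinder (uv.1 ++ p) ×ˢ prefixCylinder (uv.2 ++ q) ⊆ U := by
  induction s, hs using Set.Finite.induction_on with
  | empty => exact ⟨[], [], by simp⟩
  | @insert uv s _ _ ih =>
    obtain ⟨p, q, hpq⟩ := ih
    obtain ⟨-, -, ⟨r, rfl⟩, ⟨t, rfl⟩, hsub⟩ :=
      exists_prefix_prod_subset hUo hUd (uv.1 ++ p) (uv.2 ++ q)
    refine ⟨p ++ r, q ++ t, ?_⟩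
    rintro uv' (rfl | huv')
    · simpa only [List.append_assoc] using hsub
    · refine (prod_mono (prefixCylinder_anti ?_) (prefixCylinder_anti ?_)).trans (hpq uv' huv') <;>
        simp

theorem exists_splitting_block (hUo : IsOpen U) (hUd : Dense U) (L : ℕ) :
    ∃ w : Bool → List Bool, (w true).length = (w false).length ∧ 0 < (w false).length ∧
      ∀ u v : List Bool, u.length = L → v.length = L → ∀ i j, i ≠ j →
        prefixCylinder (u ++ w i) ×ˢ prefixCylinder (v ++ w j) ⊆ U := by
  have hVo : IsOpen (U ∩ Prod.swap ⁻¹' U) := hUo.inter (hUo.preimage continuous_swap)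
  have hVd : Dense (U ∩ Prod.swap ⁻¹' U) :=
    hUd.inter_of_isOpen_left (hUd.preimage (Homeomorph.prodComm _ _).isOpenMap) hUo
  obtain ⟨p, q, hpq⟩ := exists_forall_prod_prefixCylinder_subset hVo hVd
    ((List.finite_length_eq Bool L).prod (List.finite_length_eq Bool L))
  let w : Bool → List Bool := fun b =>
    if b then q ++ List.replicate (p.length + 1) false else p ++ List.replicate (q.length + 1) false
  have hp (u : List Bool) : prefixCylinder (u ++ w false) ⊆ prefixCylinder (u ++ p) :=
    prefixCylinder_anti (by simp [w])
  have hq (u : List Bool) : prefixCylinder (u ++ w true) ⊆ prefixCylinder (u ++ q) :=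
    prefixCylinder_anti (by simp [w])
  refine ⟨w, by simp [w]; omega, by simp [w], ?_⟩
  rintro u v hu hv (_ | _) (_ | _) hij z hz <;> simp only [ne_eq, not_true_eq_false] at hij
  · exact (hpq (u, v) ⟨hu, hv⟩ (prod_mono (hp u) (hq v) hz)).1
  · exact (hpq (v, u) ⟨hv, hu⟩ (a := z.swap) (prod_mono (hp v) (hq u) ⟨hz.2, hz.1⟩)).2

section BlockPrefix

variable {α β : Type*} (w : ℕ → β → List α)

def blockPrefix (x : ℕ → β) : ℕ → List α
  | 0 => []
  | m + 1 => blockPrefix x m ++ w m (x m)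

variable {w}

theorem blockPrefix_prefix (x : ℕ → β) {m n : ℕ} (h : m ≤ n) :
    blockPrefix w x m <+: blockPrefix w x n := by
  induction n, h using Nat.le_induction with
  | base => exact List.prefix_refl _
  | succ n _ ih => exact ih.trans (List.prefix_append _ _)

theorem blockPrefix_congr {x y : ℕ → β} {m : ℕ} (h : ∀ i < m, x i = y i) :
    blockPrefix w x m = blockPrefix w y m := by
  induction m with
  | zero => rfl
  | succ m ih =>
    rw [blockPrefix, blockPrefix, ih fun i hi => h i (by omega), h m (by omega)]

theorem blockPrefix_add (x : ℕ → β) (m k : ℕ) :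
    blockPrefix w x (m + k) =
      blockPrefix w x m ++ blockPrefix (fun i => w (m + i)) (fun i => x (m + i)) k := by
  induction k with
  | zero => simp [blockPrefix]
  | succ k ih => rw [← add_assoc, blockPrefix, ih, blockPrefix, List.append_assoc]

theorem length_blockPrefix {ℓ : ℕ → ℕ} (hw : ∀ m b, (w m b).length = ℓ m) (x : ℕ → β) (m : ℕ) :
    (blockPrefix w x m).length = ∑ i ∈ Finset.range m, ℓ i := by
  induction m with
  | zero => rfl
  | succ m ih => rw [blockPrefix, List.length_append, ih, hw, Finset.sum_range_succ]

theorem le_length_blockPrefix (hpos : ∀ m b, 0 < (w m b).length) (x : ℕ → β) (m : ℕ) :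
    m ≤ (blockPrefix w x m).length := by
  induction m with
  | zero => exact le_rfl
  | succ m ih =>
    rw [blockPrefix, List.length_append]
    have := hpos m (x m)
    omega

end BlockPrefix

/-- The concatenation `w 0 (x 0) ++ w 1 (x 1) ++ ⋯`; when all blocks are nonempty its `n`-th letter
is already fixed by the first `n + 1` blocks. -/
def blockMap (w : ℕ → Bool → List Bool) (x : ℕ → Bool) (n : ℕ) : Bool :=
  (blockPrefix w x (n + 1)).getD n false

section BlockMap

variable {w : ℕ → Bool → List Bool}

theorem blockMap_eq_getD (hpos : ∀ m b, 0 < (w m b).length) {x : ℕ → Bool} {n M : ℕ}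
    (hn : n < (blockPrefix w x M).length) : blockMap w x n = (blockPrefix w x M).getD n false := by
  rcases le_total (n + 1) M with h | h
  · exact ((blockPrefix_prefix x h).getD_eq
      ((le_length_blockPrefix hpos x (n + 1)).trans_lt' n.lt_succ_self) false).symm
  · exact (blockPrefix_prefix x h).getD_eq hn false

theorem blockMap_mem_prefixCylinder (hpos : ∀ m b, 0 < (w m b).length) (x : ℕ → Bool) (M : ℕ) :
    blockMap w x ∈ prefixCylinder (blockPrefix w x M) :=
  mem_prefixCylinder.2 fun _ hn => blockMap_eq_getD hpos hn

theorem continuous_blockMap (w : ℕ → Bool → List Bool) : Continuous (blockMap w) :=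
  continuous_of_forall_exists_cylinder fun n =>
    ⟨n + 1, fun x y hy => by rw [blockMap, blockMap, blockPrefix_congr (mem_cylinder_iff.1 hy)]⟩

theorem E0_blockMap {ℓ : ℕ → ℕ} (hw : ∀ m b, (w m b).length = ℓ m)
    (hpos : ∀ m b, 0 < (w m b).length) {x y : ℕ → Bool} (h : E0 x y) :
    E0 (blockMap w x) (blockMap w y) := by
  obtain ⟨N, hN⟩ := h
  have hlen : ∀ z, (blockPrefix w z N).length = ∑ i ∈ Finset.range N, ℓ i :=
    fun z => length_blockPrefix hw z N
  refine ⟨∑ i ∈ Finset.range N, ℓ i, fun n hn => ?_⟩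
  have hget : ∀ z, blockMap w z n =
      (blockPrefix (fun i => w (N + i)) (fun i => z (N + i)) (n + 1)).getD
        (n - ∑ i ∈ Finset.range N, ℓ i) false := by
    intro z
    rw [blockMap_eq_getD hpos (M := N + (n + 1)), blockPrefix_add, List.getD_append_right _ _ _ _
      (hlen z ▸ hn), hlen]
    exact (le_length_blockPrefix hpos z _).trans_lt' (by omega)
  rw [hget, hget, blockPrefix_congr fun i _ => hN (N + i) (Nat.le_add_right N i)]

end BlockMap

/-- Starting positions of consecutive blocks when the length of a block depends on where it
starts. -/
def blockOffsets (len : ℕ → ℕ → ℕ) : ℕ → ℕ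
  | 0 => 0
  | m + 1 => blockOffsets len m + len m (blockOffsets len m)

theorem blockOffsets_eq_sum (len : ℕ → ℕ → ℕ) (m : ℕ) :
    blockOffsets len m = ∑ i ∈ Finset.range m, len i (blockOffsets len i) := by
  induction m with
  | zero => rfl
  | succ m ih => rw [Finset.sum_range_succ, ← ih, blockOffsets]

theorem exists_continuous_E0_hom_forall_ne_mem (U : ℕ → Set ((ℕ → Bool) × (ℕ → Bool)))
    (hUo : ∀ m, IsOpen (U m)) (hUd : ∀ m, Dense (U m)) :
    ∃ f : (ℕ → Bool) → (ℕ → Bool), Continuous f ∧ (∀ x y, E0 x y → E0 (f x) (f y)) ∧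
      ∀ x y m, x m ≠ y m → (f x, f y) ∈ U m := by
  choose block hlen hpos hU using fun m => exists_splitting_block (hUo m) (hUd m)
  set len := fun m L => (block m L false).length
  set w := fun m => block m (blockOffsets len m)
  have hw : ∀ m b, (w m b).length = len m (blockOffsets len m) := by
    rintro m (_ | _)
    exacts [rfl, hlen _ _]
  have hwpos : ∀ m b, 0 < (w m b).length := fun m b => hw m b ▸ hpos _ _
  have hprefix : ∀ x m, (blockPrefix w x m).length = blockOffsets len m := fun x m =>
    (length_blockPrefix hw x m).trans (blockOffsets_eq_sum len m).symm
  refine ⟨blockMap w, continuous_blockMap w, fun x y => E0_blockMap hw hwpos,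
    fun x y m hm => hU m _ _ _ (hprefix x m) (hprefix y m) _ _ hm ⟨?_, ?_⟩⟩
  exacts [blockMap_mem_prefixCylinder hwpos x (m + 1), blockMap_mem_prefixCylinder hwpos y (m + 1)]

end Cantor

/-- For any comeager `C ⊆ 2^ℕ × 2^ℕ` there is a continuous homomorphism `f` from `E₀`
to `E₀` such that `¬ x E₀ y` implies `(f x, f y) ∈ C`. -/
theorem E0_splitting_homomorphism (C : Set ((ℕ → Bool) × (ℕ → Bool)))
    (hC : C ∈ residual ((ℕ → Bool) × (ℕ → Bool))) :
    ∃ f : (ℕ → Bool) → (ℕ → Bool), Continuous f ∧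
      (∀ x y, E0 x y → E0 (f x) (f y)) ∧
      (∀ x y, ¬ E0 x y → (f x, f y) ∈ C) := by
  obtain ⟨t, htC, htGδ, htd⟩ := mem_residual.mp hC
  obtain ⟨D, hDo, rfl⟩ := htGδ.eq_iInter_nat
  obtain ⟨f, hfc, hfE, hfD⟩ :=
    Cantor.exists_continuous_E0_hom_forall_ne_mem (fun m => ⋂ k ∈ Iic m, D k)
    (fun m => (finite_Iic m).isOpen_biInter fun k _ => hDo k)
    (fun m => dense_biInter_of_isOpen (fun k _ => hDo k) (to_countable _)
      fun k _ => htd.mono (iInter_subset D k))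
  refine ⟨f, hfc, hfE, fun x y hxy => htC (mem_iInter.2 fun k => ?_)⟩
  obtain ⟨m, hkm, hm⟩ : ∃ m ≥ k, x m ≠ y m := by
    by_contra! h
    exact hxy ⟨k, h⟩
  exact mem_iInter₂.1 (hfD x y m hm) k hkm
end

section
/- Let E be an analytic equivalence relation on a Polish space Y. Either E₀ ≤_B E, or every Borel homomorphism f : E₀ →_B E maps a comeager subset of 2^ℕ into a single E-class. -/
/-!
Pull `E` back to `F = (f × f)⁻¹ E ⊆ 2^ℕ × 2^ℕ`. Being analytic, `F` has the Baire property, and it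
is invariant under `E₀ × E₀`; since flipping finitely many bits moves any basic box onto any other
of the same level, `F` is either meagre or comeagre.

If `F` is meagre, cover it by an increasing sequence of closed nowhere dense sets `Kₙ` and build
`g x` as a concatenation of blocks `eₙ(x n)`, where the two blocks `eₙ(0)`, `eₙ(1)` have equal
length and are chosen so that, after every possible common prefix, the corresponding pairs of
cylinders avoid `Kₙ`. Then `g` is a continuous homomorphism of `E₀` sending `E₀`-inequivalent pairs
outside `F`, and `f ∘ g` reduces `E₀` to `E`.

If `F` is comeagre, Kuratowski–Ulam gives comeagre many `x` whose section `Fₓ` is comeagre; any two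
such sections meet, so all these `x` are sent into a single `E`-class.
-/

open MeasureTheory

open Set Filter Topology TopologicalSpace

section Baire

variable {X Y : Type*} [TopologicalSpace X] [TopologicalSpace Y]

theorem isMeagre_diff_of_residualEq {s t : Set X} (h : s =ᵇ t) : IsMeagre (s \ t) :=
  mem_of_superset (eventuallyEq_set.1 h) fun _ hx hst => hst.2 (hx.1 hst.1)

theorem IsMeagre.exists_monotone_isClosed_cover {M : Set X} (hM : IsMeagre M) :
    ∃ K : ℕ → Set X, (∀ n, IsClosed (K n)) ∧ (∀ n, Dense (K n)ᶜ) ∧ Monotone K ∧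
      M ⊆ ⋃ n, K n := by
  obtain ⟨S, hSo, hSd, hSc, hSM⟩ := mem_residual_iff.1 hM
  obtain ⟨U, hU⟩ := (hSc.insert univ).exists_eq_range (insert_nonempty _ _)
  have hUod : ∀ n, IsOpen (U n) ∧ Dense (U n) := by
    intro n
    rcases (hU ▸ mem_range_self n : U n ∈ insert univ S) with h | h
    exacts [h ▸ ⟨isOpen_univ, dense_univ⟩, ⟨hSo _ h, hSd _ h⟩]
  have hfin : ∀ n, (U '' Iic n).Finite := fun n => (finite_Iic n).image U
  refine ⟨fun n => (⋂₀ (U '' Iic n))ᶜ, fun n => ?_, fun n => ?_, fun m n hmn => ?_, ?_⟩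
  · exact ((hfin n).isOpen_sInter (forall_mem_image.2 fun k _ => (hUod k).1)).isClosed_compl
  · rw [compl_compl]
    exact (hfin n).dense_sInter (forall_mem_image.2 fun k _ => (hUod k).1)
      (forall_mem_image.2 fun k _ => (hUod k).2)
  · exact compl_subset_compl.2 (sInter_subset_sInter (image_mono (Iic_subset_Iic.2 hmn)))
  · intro x hxM
    obtain ⟨V, hV, hxV⟩ : ∃ V ∈ S, x ∉ V := by
      by_contra! h
      exact hSM (mem_sInter.2 h) hxM
    obtain ⟨n, rfl⟩ : V ∈ range U := hU ▸ mem_insert_of_mem _ hV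
    exact mem_iUnion.2 ⟨n, fun hx => hxV (hx _ (mem_image_of_mem U (mem_Iic.2 le_rfl)))⟩

theorem exists_baireMeasurableSet_hull [SecondCountableTopology X] (S : Set X) :
    ∃ B, BaireMeasurableSet B ∧ S ⊆ B ∧
      ∀ Z, BaireMeasurableSet Z → S ⊆ Z → IsMeagre (B \ Z) := by
  let 𝒱 := {V ∈ countableBasis X | IsMeagre (S ∩ V)}
  let W := ⋃₀ 𝒱
  have hW : IsOpen W := isOpen_sUnion fun V hV => isOpen_of_mem_countableBasis hV.1
  have hSW : IsMeagre (S ∩ W) := by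
    have : Countable 𝒱 := ((countable_countableBasis X).mono fun _ hV => hV.1).to_subtype
    refine (isMeagre_iUnion fun V : 𝒱 => V.2.2).mono ?_
    rintro x ⟨hxS, V, hV, hxV⟩
    exact mem_iUnion.2 ⟨⟨V, hV⟩, hxS, hxV⟩
  refine ⟨S ∪ Wᶜ, ?_, subset_union_left, fun Z hZ hSZ => ?_⟩
  · rw [← inter_univ (S ∪ Wᶜ), ← union_compl_self W, ← inter_union_distrib_right]
    exact hSW.baireMeasurableSet.union hW.baireMeasurableSet.compl
  · obtain ⟨U, hUo, hZU⟩ := hZ.compl.residualEq_isOpen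
    have hUW : U ⊆ W := by
      intro x hxU
      obtain ⟨V, hVb, hxV, hVU⟩ :=
        (isBasis_countableBasis X).exists_subset_of_mem_open hxU hUo
      refine ⟨V, ⟨hVb, (isMeagre_diff_of_residualEq hZU.symm).mono ?_⟩, hxV⟩
      exact fun y hy => ⟨hVU hy.2, not_not.2 (hSZ hy.1)⟩
    refine (isMeagre_diff_of_residualEq hZU).mono ?_
    rintro x ⟨hxS | hxW, hxZ⟩
    exacts [absurd (hSZ hxS) hxZ, ⟨hxZ, fun hxU => hxW (hUW hxU)⟩]

variable [SecondCountableTopology Y]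

theorem eventually_residual_of_isOpen_of_dense {u : Set (X × Y)} (hu : IsOpen u)
    (hd : Dense u) : ∀ᶠ x in residual X, ∀ᶠ y in residual Y, (x, y) ∈ u := by
  obtain ⟨b, hbc, hbe, hb⟩ := exists_countable_basis Y
  have hproj : ∀ V ∈ b, ∀ᶠ x in residual X, ∃ y ∈ V, (x, y) ∈ u := by
    intro V hV
    have hVne : V.Nonempty := nonempty_iff_ne_empty.2 (ne_of_mem_of_not_mem hV hbe)
    refine residual_of_dense_open ?_ (dense_iff_inter_open.2 fun O hO hOne => ?_)
    · convert isOpen_biUnion fun y (_ : y ∈ V) => hu.preimage (Continuous.prodMk_left y) using 1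
      ext; simp
    · obtain ⟨⟨x, y⟩, ⟨hxO, hyV⟩, hxy⟩ :=
        hd.inter_open_nonempty _ (hO.prod (hb.isOpen hV)) (hOne.prod hVne)
      exact ⟨x, hxO, y, hyV, hxy⟩
  filter_upwards [(eventually_countable_ball hbc).2 hproj] with x hx
  refine residual_of_dense_open (hu.preimage (Continuous.prodMk_right x))
    (hb.dense_iff.2 fun V hV _ => ?_)
  obtain ⟨y, hyV, hyu⟩ := hx V hV
  exact ⟨y, hyV, hyu⟩

theorem eventually_residual_of_residual_prod {p : X × Y → Prop}
    (h : ∀ᶠ z in residual (X × Y), p z) :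
    ∀ᶠ x in residual X, ∀ᶠ y in residual Y, p (x, y) := by
  obtain ⟨S, hSo, hSd, hSc, hSp⟩ := mem_residual_iff.1 h
  filter_upwards [(eventually_countable_ball hSc).2 fun u hu =>
    eventually_residual_of_isOpen_of_dense (hSo u hu) (hSd u hu)] with x hx
  filter_upwards [(eventually_countable_ball hSc).2 hx] with y hy
  exact hSp (mem_sInter.2 hy)

end Baire

theorem MeasureTheory.AnalyticSet.preimage_of_measurable {X Y : Type*} [TopologicalSpace X]
    [PolishSpace X] [MeasurableSpace X] [BorelSpace X] [TopologicalSpace Y] [T2Space Y]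
    [SecondCountableTopology Y] [MeasurableSpace Y] [OpensMeasurableSpace Y] {s : Set Y}
    (hs : AnalyticSet s) {f : X → Y} (hf : Measurable f) : AnalyticSet (f ⁻¹' s) := by
  let t := ‹TopologicalSpace X›
  obtain ⟨t', ht', hft', hpol⟩ := hf.exists_continuous
  have := @AnalyticSet.preimage X Y t' _ hpol _ s hs f hft'
  simpa using @AnalyticSet.image_of_continuous X t' X t _ this id (continuous_id_of_le ht')

section Cylinder

open PiNat

variable {α : Type*}

theorem exists_cylinder_subset {E : ℕ → Type*} [∀ n, TopologicalSpace (E n)]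
    [∀ n, DiscreteTopology (E n)] {x : ∀ n, E n} {U : Set (∀ n, E n)} (hU : U ∈ 𝓝 x) :
    ∃ n, cylinder x n ⊆ U := by
  obtain ⟨_, ⟨z, n, rfl⟩, hxz, hzU⟩ := (isTopologicalBasis_cylinders E).mem_nhds_iff.1 hU
  exact ⟨n, (mem_cylinder_iff_eq.1 hxz).symm ▸ hzU⟩

theorem exists_cylinder_prod_subset [TopologicalSpace α] [DiscreteTopology α] {x y : ℕ → α}
    {U : Set ((ℕ → α) × (ℕ → α))} (hU : U ∈ 𝓝 (x, y)) :
    ∃ n, cylinder x n ×ˢ cylinder y n ⊆ U := by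
  obtain ⟨u, hu, v, hv, huv⟩ := mem_nhds_prod_iff.1 hU
  obtain ⟨m, hm⟩ := exists_cylinder_subset hu
  obtain ⟨n, hn⟩ := exists_cylinder_subset hv
  exact ⟨max m n, (Set.prod_mono ((cylinder_anti x (le_max_left m n)).trans hm)
    ((cylinder_anti y (le_max_right m n)).trans hn)).trans huv⟩

theorem diag_mem_cylinder {u : ℕ → ℕ → α} {ℓ : ℕ → ℕ} (hℓ : StrictMono ℓ)
    (hu : ∀ n, u (n + 1) ∈ cylinder (u n) (ℓ n)) (n : ℕ) :
    (fun i => u (i + 1) i) ∈ cylinder (u n) (ℓ n) := by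
  have hchain : ∀ m n, m ≤ n → u n ∈ cylinder (u m) (ℓ m) := by
    intro m n hmn
    induction n, hmn using Nat.le_induction with
    | base => exact self_mem_cylinder _ _
    | succ n hmn ih =>
      rw [← mem_cylinder_iff_eq.1 ih]
      exact cylinder_anti _ (hℓ.monotone hmn) (hu n)
  intro i hi
  rcases le_total (i + 1) n with h | h
  · exact (hchain _ _ h i ((Nat.lt_succ_self i).trans_le (hℓ.id_le (i + 1)))).symm
  · exact hchain _ _ h i hi

theorem exists_branch {p : (ℕ → α) → ℕ → Prop} {z : ℕ → α} (h0 : p z 0)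
    (hstep : ∀ x n, p x n → ∃ a, p (Function.update x n a) (n + 1)) :
    ∃ y, ∀ n, ∃ x, p x n ∧ cylinder x n = cylinder y n := by
  have : Nonempty α := ⟨z 0⟩
  choose! a ha using hstep
  let u : ℕ → ℕ → α := fun n => Nat.rec z (fun n x => Function.update x n (a x n)) n
  have hp : ∀ n, p (u n) n := fun n => Nat.rec h0 (fun n ih => ha _ _ ih) n
  refine ⟨fun i => u (i + 1) i, fun n => ⟨u n, hp n, (mem_cylinder_iff_eq.1 ?_).symm⟩⟩
  exact diag_mem_cylinder strictMono_id (fun n => update_mem_cylinder _ _ _) n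

theorem mem_range_of_forall_exists_update {X : Type*} [TopologicalSpace X] [T2Space X]
    [TopologicalSpace α] [DiscreteTopology α] {g : (ℕ → α) → X} (hg : Continuous g)
    {P : Set (ℕ → α) → Set X} (hP : ∀ C, P C ⊆ closure (g '' C)) {x₀ : X} (h0 : x₀ ∈ P univ)
    (hstep : ∀ (x : ℕ → α) (n : ℕ), x₀ ∈ P (cylinder x n) →
      ∃ a, x₀ ∈ P (cylinder (Function.update x n a) (n + 1))) :
    x₀ ∈ range g := by
  obtain ⟨_, z, -, -⟩ := closure_nonempty_iff.1 ⟨x₀, hP _ h0⟩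
  obtain ⟨y, hy⟩ := exists_branch (p := fun x n => x₀ ∈ P (cylinder x n)) (z := z)
    (by rwa [cylinder_zero]) hstep
  refine ⟨y, by_contra fun hne => ?_⟩
  obtain ⟨U, hU, V, hV, hUV⟩ := Filter.disjoint_iff.1 (disjoint_nhds_nhds.2 (Ne.symm hne))
  obtain ⟨n, hn⟩ := exists_cylinder_subset (hg.continuousAt hV)
  obtain ⟨x, hx, hxy⟩ := hy n
  obtain ⟨_, hxU, w, hw, rfl⟩ := mem_closure_iff_nhds.1 (hP _ hx) U hU
  exact disjoint_left.1 hUV hxU (hn (hxy ▸ hw))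

theorem isMeagre_iUnion_of_cylinder_congr {X : Type*} [TopologicalSpace X]
    {D : (ℕ → ℕ) → ℕ → Set X} (hD : ∀ x n, IsMeagre (D x n))
    (hcongr : ∀ (x y : ℕ → ℕ) (n : ℕ), y ∈ cylinder x n → D y n = D x n) :
    IsMeagre (⋃ (x) (n), D x n) := by
  refine (isMeagre_iUnion fun n => isMeagre_iUnion fun a : Fin n → ℕ =>
    hD (fun i => if h : i < n then a ⟨i, h⟩ else 0) n).mono (iUnion₂_subset fun x n => ?_)
  rw [← hcongr x _ n fun i hi => dif_pos hi]
  exact subset_iUnion₂_of_subset n (fun i => x i) subset_rfl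

/-- The sets `P C` are Baire hulls of the images of cylinders; off the meagre union of the
differences `D x n` between a hull and the union of the hulls one level down, every point of the
top hull follows a branch of cylinders and is the image of its limit. -/
theorem baireMeasurableSet_range_of_continuous {X : Type*} [TopologicalSpace X] [T2Space X]
    [SecondCountableTopology X] {g : (ℕ → ℕ) → X} (hg : Continuous g) :
    BaireMeasurableSet (range g) := by
  choose H hHm hSH hHmin using fun S : Set X => exists_baireMeasurableSet_hull S
  let P : Set (ℕ → ℕ) → Set X := fun C => H (g '' C) ∩ closure (g '' C)
  have hPm : ∀ C, BaireMeasurableSet (P C) := fun C =>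
    (hHm _).inter isClosed_closure.isOpen_compl.baireMeasurableSet.of_compl
  have hPsub : ∀ C, g '' C ⊆ P C := fun C => subset_inter (hSH _) subset_closure
  let D : (ℕ → ℕ) → ℕ → Set X := fun x n =>
    P (cylinder x n) \ ⋃ k, P (cylinder (Function.update x n k) (n + 1))
  have hD : ∀ (x : ℕ → ℕ) n, IsMeagre (D x n) := by
    intro x n
    refine (hHmin _ _ (.iUnion fun k => hPm _) ?_).mono
      (sdiff_subset_sdiff_left inter_subset_left)
    rw [← iUnion_cylinder_update x n, image_iUnion]
    exact iUnion_mono fun k => hPsub _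
  have hDcongr : ∀ (x y : ℕ → ℕ) (n : ℕ), y ∈ cylinder x n → D y n = D x n := by
    intro x y n hy
    have hupd : ∀ k, cylinder (Function.update y n k) (n + 1) =
        cylinder (Function.update x n k) (n + 1) := fun k =>
      mem_cylinder_iff_eq.1 fun i hi => by
        rcases Nat.lt_succ_iff_lt_or_eq.1 hi with hi | rfl
        · simp [Function.update, hi.ne, hy i hi]
        · simp
    simp only [D, mem_cylinder_iff_eq.1 hy, hupd]
  have hPD : P univ \ ⋃ (x) (n), D x n ⊆ range g := by
    rintro x₀ ⟨hx₀, hx₀D⟩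
    refine mem_range_of_forall_exists_update hg (P := P) (fun C => inter_subset_right) hx₀
      fun x n hx => ?_
    by_contra! h
    exact hx₀D (mem_iUnion₂.2 ⟨x, n, hx, by simpa using h⟩)
  have hrange : range g ⊆ P univ := image_univ ▸ hPsub univ
  rw [← sdiff_sdiff_cancel_left hrange]
  refine (hPm univ).diff (IsMeagre.baireMeasurableSet ?_)
  exact (isMeagre_iUnion_of_cylinder_congr hD hDcongr).mono fun x hx =>
    by_contra fun hxD => hx.2 (hPD ⟨hx.1, hxD⟩)

end Cylinder

theorem MeasureTheory.AnalyticSet.baireMeasurableSet {X : Type*} [TopologicalSpace X]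
    [T2Space X] [SecondCountableTopology X] {A : Set X} (hA : AnalyticSet A) :
    BaireMeasurableSet A := by
  rw [AnalyticSet] at hA
  rcases hA with rfl | ⟨g, hg, rfl⟩
  exacts [IsMeagre.empty.baireMeasurableSet, baireMeasurableSet_range_of_continuous hg]

section CantorSpace

open PiNat

theorem E0.symm {x y : ℕ → Bool} (h : E0 x y) : E0 y x :=
  let ⟨N, hN⟩ := h
  ⟨N, fun n hn => (hN n hn).symm⟩

theorem exists_ge_ne_of_not_E0 {x y : ℕ → Bool} (h : ¬E0 x y) (n : ℕ) :
    ∃ m ≥ n, x m ≠ y m := by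
  simp only [E0, not_exists, not_forall] at h
  simpa using h n

def flipOn (S : Finset ℕ) : (ℕ → Bool) ≃ₜ (ℕ → Bool) where
  toFun x i := x i ^^ decide (i ∈ S)
  invFun x i := x i ^^ decide (i ∈ S)
  left_inv x := by funext i; simp
  right_inv x := by funext i; simp
  continuous_toFun := continuous_pi fun i =>
    (continuous_of_discreteTopology (f := fun b : Bool => b ^^ decide (i ∈ S))).comp
      (continuous_apply i)
  continuous_invFun := continuous_pi fun i =>
    (continuous_of_discreteTopology (f := fun b : Bool => b ^^ decide (i ∈ S))).comp
      (continuous_apply i)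

theorem flipOn_E0 (S : Finset ℕ) (x : ℕ → Bool) : E0 (flipOn S x) x := by
  obtain ⟨N, hN⟩ := S.exists_nat_subset_range
  refine ⟨N, fun n hn => ?_⟩
  have hnS : n ∉ S := fun h => (Finset.mem_range.1 (hN h)).not_ge hn
  simp [flipOn, hnS]

theorem exists_flipOn_mem_cylinder (x y : ℕ → Bool) (n : ℕ) :
    ∃ S, flipOn S x ∈ cylinder y n := by
  refine ⟨(Finset.range n).filter fun i => x i ≠ y i, fun i hi => ?_⟩
  cases hx : x i <;> cases hy : y i <;> simp [flipOn, hi, hx, hy]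

theorem isMeagre_or_mem_residual_of_E0_invariant {F : Set ((ℕ → Bool) × (ℕ → Bool))}
    (hF : BaireMeasurableSet F)
    (hinv : ∀ x x' y y', E0 x x' → E0 y y' → (x, y) ∈ F → (x', y') ∈ F) :
    IsMeagre F ∨ F ∈ residual _ := by
  obtain ⟨U, hUo, hFU⟩ := hF.residualEq_isOpen
  rcases U.eq_empty_or_nonempty with rfl | ⟨⟨x₀, y₀⟩, hU⟩
  · exact .inl (by simpa using isMeagre_diff_of_residualEq hFU)
  obtain ⟨n, hn⟩ := exists_cylinder_prod_subset (hUo.mem_nhds hU)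
  have hbox : IsMeagre (cylinder x₀ n ×ˢ cylinder y₀ n \ F) :=
    (isMeagre_diff_of_residualEq hFU.symm).mono (sdiff_subset_sdiff_left hn)
  have hcover : Fᶜ ⊆ ⋃ S : Finset ℕ × Finset ℕ,
      (flipOn S.1).prodCongr (flipOn S.2) ⁻¹' (cylinder x₀ n ×ˢ cylinder y₀ n \ F) := by
    rintro ⟨x, y⟩ hxy
    obtain ⟨S, hS⟩ := exists_flipOn_mem_cylinder x x₀ n
    obtain ⟨T, hT⟩ := exists_flipOn_mem_cylinder y y₀ n
    exact mem_iUnion.2 ⟨(S, T), ⟨hS, hT⟩,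
      fun h => hxy (hinv _ _ _ _ (flipOn_E0 S x) (flipOn_E0 T y) h)⟩
  refine .inr (compl_compl F ▸ (isMeagre_iUnion fun S => ?_).mono hcover)
  exact hbox.preimage_of_isOpenMap (Homeomorph.continuous _) (Homeomorph.isOpenMap _)

variable {α : Type*}

def splice (x : ℕ → α) (n : ℕ) (y : ℕ → α) : ℕ → α := fun i => if i < n then x i else y i

theorem splice_mem_cylinder (x : ℕ → α) (n : ℕ) (y : ℕ → α) : splice x n y ∈ cylinder x n :=
  fun _ hi => if_pos hi

theorem splice_eq_of_mem_cylinder {x y : ℕ → α} {n : ℕ} (h : y ∈ cylinder x n) :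
    splice x n y = y :=
  funext fun i => by
    by_cases hi : i < n
    · simp [splice, hi, h i hi]
    · simp [splice, hi]

theorem mem_cylinder_of_mem_cylinder_splice {x e a : ℕ → α} {n m : ℕ} (hnm : n ≤ m)
    (h : a ∈ cylinder (splice x n e) m) : a ∈ cylinder x n :=
  fun i hi => (h i (hi.trans_le hnm)).trans (if_pos hi)

theorem splice_mem_cylinder_splice {u e a : ℕ → α} {n m : ℕ}
    (h : a ∈ cylinder (splice u n e) m) (v : ℕ → α) :
    splice v n a ∈ cylinder (splice v n e) m := fun i hi => by
  by_cases hin : i < n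
  · simp [splice, hin]
  · simpa [splice, hin] using h i hi

variable {K : Set ((ℕ → Bool) × (ℕ → Bool))}

theorem exists_block_of_finite (hKd : Dense Kᶜ) (hK : IsClosed K) (ℓ : ℕ)
    {P : Set ((ℕ → Bool) × (ℕ → Bool))} (hP : P.Finite) :
    ∃ ℓ' > ℓ, ∃ e₀ e₁ : ℕ → Bool, ∀ p ∈ P,
      cylinder (splice p.1 ℓ e₀) ℓ' ×ˢ cylinder (splice p.2 ℓ e₁) ℓ' ⊆ Kᶜ := by
  induction P, hP using Set.Finite.induction_on with
  | empty => exact ⟨ℓ + 1, ℓ.lt_succ_self, default, default, by simp⟩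
  | @insert p P _ _ ih =>
    obtain ⟨ℓ₁, hℓ₁, e₀, e₁, he⟩ := ih
    obtain ⟨⟨a, b⟩, ⟨ha, hb⟩, habK⟩ := hKd.inter_open_nonempty _
      ((isOpen_cylinder _ _ _).prod (isOpen_cylinder _ _ _))
      ⟨(splice p.1 ℓ e₀, splice p.2 ℓ e₁), self_mem_cylinder _ _, self_mem_cylinder _ _⟩
    obtain ⟨m, hm⟩ := exists_cylinder_prod_subset (hK.isOpen_compl.mem_nhds habK)
    refine ⟨max m ℓ₁, hℓ₁.trans_le (le_max_right _ _), a, b, ?_⟩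
    rintro q (rfl | hq)
    · rw [splice_eq_of_mem_cylinder (mem_cylinder_of_mem_cylinder_splice hℓ₁.le ha),
        splice_eq_of_mem_cylinder (mem_cylinder_of_mem_cylinder_splice hℓ₁.le hb)]
      exact (Set.prod_mono (cylinder_anti _ (le_max_left _ _))
        (cylinder_anti _ (le_max_left _ _))).trans hm
    · refine (Set.prod_mono ?_ ?_).trans (he q hq)
      · rw [← mem_cylinder_iff_eq.1 (splice_mem_cylinder_splice ha q.1)]
        exact cylinder_anti _ (le_max_right _ _)
      · rw [← mem_cylinder_iff_eq.1 (splice_mem_cylinder_splice hb q.2)]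
        exact cylinder_anti _ (le_max_right _ _)

theorem exists_block (hKd : Dense Kᶜ) (hK : IsClosed K) (ℓ : ℕ) :
    ∃ ℓ' > ℓ, ∃ e₀ e₁ : ℕ → Bool, ∀ u v : ℕ → Bool,
      cylinder (splice u ℓ e₀) ℓ' ×ˢ cylinder (splice v ℓ e₁) ℓ' ⊆ Kᶜ := by
  let r : (Fin ℓ → Bool) → ℕ → Bool := fun a i => if h : i < ℓ then a ⟨i, h⟩ else false
  have hr : ∀ u e : ℕ → Bool, splice (r fun i => u i) ℓ e = splice u ℓ e := fun u e =>
    funext fun i => by by_cases hi : i < ℓ <;> simp [splice, r, hi]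
  obtain ⟨ℓ', hℓ', e₀, e₁, he⟩ := exists_block_of_finite hKd hK ℓ
    (finite_range fun q : (Fin ℓ → Bool) × (Fin ℓ → Bool) => (r q.1, r q.2))
  refine ⟨ℓ', hℓ', e₀, e₁, fun u v => ?_⟩
  simpa only [hr] using he _ ⟨((fun i => u i), fun i => v i), rfl⟩

variable (ℓ : ℕ → ℕ) (e : ℕ → Bool → ℕ → Bool)

/-- In `blockMap ℓ e x` the block `e k (x k)` occupies the positions `[ℓ k, ℓ (k + 1))`;
`blockPrefix ℓ e n x` agrees with it below `ℓ n`. -/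
def blockPrefix : ℕ → (ℕ → Bool) → ℕ → Bool
  | 0, _ => fun _ => false
  | n + 1, x => splice (blockPrefix n x) (ℓ n) (e n (x n))

def blockMap (x : ℕ → Bool) : ℕ → Bool := fun i => blockPrefix ℓ e (i + 1) x i

theorem blockPrefix_congr {x y : ℕ → Bool} {n : ℕ} (h : y ∈ cylinder x n) :
    blockPrefix ℓ e n y = blockPrefix ℓ e n x := by
  induction n with
  | zero => rfl
  | succ n ih => simp only [blockPrefix, ih (cylinder_anti _ n.le_succ h), h n n.lt_succ_self]

theorem continuous_blockMap : Continuous (blockMap ℓ e) :=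
  continuous_pi fun i => continuous_iff_continuousAt.2 fun x =>
    continuousAt_const.congr <| mem_of_superset
      ((isOpen_cylinder _ x (i + 1)).mem_nhds (self_mem_cylinder x _))
      fun _ hy => congrFun (blockPrefix_congr ℓ e hy).symm i

variable {ℓ}

theorem blockMap_mem_cylinder (hℓ : StrictMono ℓ) (x : ℕ → Bool) (n : ℕ) :
    blockMap ℓ e x ∈ cylinder (blockPrefix ℓ e n x) (ℓ n) :=
  diag_mem_cylinder (u := fun n => blockPrefix ℓ e n x) hℓ (fun _ => splice_mem_cylinder _ _ _) n

theorem E0.blockMap (hℓ : StrictMono ℓ) {x y : ℕ → Bool} (h : E0 x y) :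
    E0 (blockMap ℓ e x) (blockMap ℓ e y) := by
  obtain ⟨N, hN⟩ := h
  have key : ∀ n i, ℓ N ≤ i → i < ℓ n → blockPrefix ℓ e n x i = blockPrefix ℓ e n y i := by
    intro n
    induction n with
    | zero => exact fun i h₁ h₂ => absurd (h₁.trans_lt h₂) (hℓ.monotone N.zero_le).not_gt
    | succ n ih =>
      intro i h₁ h₂
      simp only [blockPrefix, splice]
      split_ifs with hi
      · exact ih i h₁ hi
      · rw [hN n (Nat.lt_succ_iff.1 (hℓ.lt_iff_lt.1 (h₁.trans_lt h₂)))]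
  exact ⟨ℓ N, fun i hi => key (i + 1) i hi ((Nat.lt_succ_self i).trans_le (hℓ.id_le _))⟩

theorem IsMeagre.exists_E0_hom_avoiding {M : Set ((ℕ → Bool) × (ℕ → Bool))} (hM : IsMeagre M) :
    ∃ g : (ℕ → Bool) → ℕ → Bool, Continuous g ∧ (∀ x y, E0 x y → E0 (g x) (g y)) ∧
      ∀ x y, ¬E0 x y → (g x, g y) ∉ M := by
  obtain ⟨K, hKc, hKd, hKmono, hMK⟩ := hM.exists_monotone_isClosed_cover
  -- symmetrising `K n` lets one pair of blocks serve both orders of the bits `x n ≠ y n`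
  have hKsd : ∀ n, Dense (K n ∪ Prod.swap ⁻¹' K n)ᶜ := fun n => by
    rw [compl_union, ← preimage_compl]
    exact (hKd n).inter_of_isOpen_left ((hKd n).preimage (Homeomorph.prodComm _ _).isOpenMap)
      (hKc n).isOpen_compl
  choose L hL e₀ e₁ he using fun n =>
    exists_block (hKsd n) ((hKc n).union ((hKc n).preimage continuous_swap))
  let ℓ : ℕ → ℕ := fun n => Nat.rec 0 (fun k l => L k l) n
  have hℓ : StrictMono ℓ := strictMono_nat_of_lt_succ fun n => hL n (ℓ n)
  let e : ℕ → Bool → ℕ → Bool := fun n b => bif b then e₁ n (ℓ n) else e₀ n (ℓ n)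
  refine ⟨blockMap ℓ e, continuous_blockMap ℓ e, fun x y => E0.blockMap e hℓ,
    fun x y hxy hxyM => ?_⟩
  obtain ⟨n, hn⟩ := mem_iUnion.1 (hMK hxyM)
  obtain ⟨m, hnm, hm⟩ := exists_ge_ne_of_not_E0 hxy n
  have hsep : ∀ x y : ℕ → Bool, x m = false → y m = true →
      (blockMap ℓ e x, blockMap ℓ e y) ∉ K m ∪ Prod.swap ⁻¹' K m := fun x y hx hy =>
    he m (ℓ m) (blockPrefix ℓ e m x) (blockPrefix ℓ e m y)
      ⟨by simpa [blockPrefix, e, hx] using blockMap_mem_cylinder e hℓ x (m + 1),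
        by simpa [blockPrefix, e, hy] using blockMap_mem_cylinder e hℓ y (m + 1)⟩
  have hK : (blockMap ℓ e x, blockMap ℓ e y) ∈ K m := hKmono hnm hn
  revert hm
  cases hx : x m <;> cases hy : y m <;> intro hm
  exacts [hm rfl, hsep x y hx hy (.inl hK), hsep y x hy hx (.inr hK), hm rfl]

end CantorSpace

/-- Dichotomy for homomorphisms from `E₀`: for any analytic equivalence relation `E` on a
Polish space, either `E₀ ≤_B E`, or every Borel homomorphism from `E₀` to `E` maps a
comeager subset of `2^ℕ` into a single `E`-class. -/
theorem E0_homomorphism_dichotomy {Y : Type*}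
    [TopologicalSpace Y] [PolishSpace Y] [MeasurableSpace Y] [BorelSpace Y]
    (E : Set (Y × Y)) (hAnal : AnalyticSet E)
    (hEquiv : Equivalence (fun a b => (a, b) ∈ E)) :
    (∃ f : (ℕ → Bool) → Y, Measurable f ∧ ∀ x y, E0 x y ↔ (f x, f y) ∈ E) ∨
    (∀ f : (ℕ → Bool) → Y, Measurable f → (∀ x y, E0 x y → (f x, f y) ∈ E) →
      ∃ C ∈ residual (ℕ → Bool), ∃ a : Y, ∀ x ∈ C, (f x, a) ∈ E) := by
  by_cases hred : ∃ f : (ℕ → Bool) → Y, Measurable f ∧ ∀ x y, E0 x y ↔ (f x, f y) ∈ E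
  · exact .inl hred
  refine .inr fun f hf hhom => ?_
  let F := Prod.map f f ⁻¹' E
  have hFinv : ∀ x x' y y', E0 x x' → E0 y y' → (x, y) ∈ F → (x', y') ∈ F :=
    fun x x' y y' hx hy hxy => hEquiv.trans (hEquiv.trans (hhom _ _ hx.symm) hxy) (hhom _ _ hy)
  -- instance search does not find `PolishSpace (ℕ → Bool)` without this
  have : PolishSpace Bool := inferInstance
  rcases isMeagre_or_mem_residual_of_E0_invariant
    (hAnal.preimage_of_measurable (hf.prodMap hf)).baireMeasurableSet hFinv with hF | hF
  · obtain ⟨g, hg, hgE0, hgF⟩ := hF.exists_E0_hom_avoiding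
    exact absurd ⟨f ∘ g, hf.comp hg.measurable, fun x y => ⟨fun h => hhom _ _ (hgE0 x y h),
      fun h => by_contra fun hxy => hgF x y hxy h⟩⟩ hred
  · have hC := eventually_residual_of_residual_prod hF
    obtain ⟨x₁, hx₁⟩ := (dense_of_mem_residual hC).nonempty
    refine ⟨_, hC, f x₁, fun x hx => ?_⟩
    obtain ⟨y, hxy, hx₁y⟩ := (dense_of_mem_residual (inter_mem hx hx₁)).nonempty
    exact hEquiv.trans hxy (hEquiv.symm hx₁y)
end

section
/- Let E be an equivalence relation on (2^ℕ)^ℕ extending E₀^ℕ and invariant under the action of G = (⊕ℤ₂)^ℕ. Suppose for some k, for comeager many (x,y,z) ∈ (2^ℕ)^k × (2^ℕ)^{ℕ∖k} × (2^ℕ)^{ℕ∖k} one has (x,y) E (x,z). Then E extends E₀^k on a comeager subset of (2^ℕ)^ℕ, i.e. there is a comeager C with: for u,v ∈ C, u↾k E₀^k v↾k implies u E v. -/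
/-- Gluing `(2^ℕ)^k × (2^ℕ)^{ℕ∖k} ≅ (2^ℕ)^ℕ` (identifying `ℕ∖k` with `ℕ`). -/
def glue (k : ℕ) (x : Fin k → ℕ → Bool) (y : ℕ → ℕ → Bool) : ℕ → ℕ → Bool :=
  fun n => if h : n < k then x ⟨n, h⟩ else y (n - k)

/-!
Transport the hypothesis along the homeomorphism `(x, y, z) ↦ (glue k x y, z)`: comeager many
pairs `(u, z)` satisfy `u E glue k (u↾k) z`. By Kuratowski–Ulam, for comeager many `u` the set of
such `z` is comeager. Given two such `u`, `v` with `u↾k E₀^k v↾k`, pick `z` in both slices; then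
`u E glue k (u↾k) z E₀^ℕ glue k (v↾k) z E v`.
-/

open Set TopologicalSpace Filter

section KuratowskiUlam

variable {α β : Type*} [TopologicalSpace α] [TopologicalSpace β]

lemma isOpen_setOf_exists_prodMk_mem {U : Set (α × β)} (hU : IsOpen U) (V : Set β) :
    IsOpen {a | ∃ b ∈ V, (a, b) ∈ U} := by
  have : {a | ∃ b ∈ V, (a, b) ∈ U} = ⋃ b ∈ V, (·, b) ⁻¹' U := by ext; simp
  exact this ▸ isOpen_biUnion fun b _ => hU.preimage (Continuous.prodMk_left b)

lemma dense_setOf_exists_prodMk_mem {U : Set (α × β)} (hU : Dense U) {V : Set β}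
    (hV : IsOpen V) (hVne : V.Nonempty) : Dense {a | ∃ b ∈ V, (a, b) ∈ U} := by
  refine dense_iff_inter_open.2 fun W hW ⟨w, hw⟩ => ?_
  obtain ⟨⟨a, b⟩, ⟨ha, hb⟩, hab⟩ :=
    hU.inter_open_nonempty (W ×ˢ V) (hW.prod hV) ⟨(w, hVne.some), hw, hVne.some_mem⟩
  exact ⟨a, ha, b, hb, hab⟩

variable [SecondCountableTopology β]

/-- Density of a slice need only be tested on a countable basis of `β`, and each such test is
an open dense condition on the base point. -/
lemma eventually_residual_dense_prodMk_preimage {U : Set (α × β)} (hUo : IsOpen U)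
    (hUd : Dense U) : ∀ᶠ a in residual α, Dense (Prod.mk a ⁻¹' U) := by
  have hbasis := isBasis_countableBasis β
  have hall : ∀ᶠ a in residual α, ∀ V ∈ countableBasis β, ∃ b ∈ V, (a, b) ∈ U := by
    refine (eventually_countable_ball (countable_countableBasis β)).2 fun V hV => ?_
    exact residual_of_dense_open (isOpen_setOf_exists_prodMk_mem hUo V)
      (dense_setOf_exists_prodMk_mem hUd (hbasis.isOpen hV) (nonempty_of_mem_countableBasis hV))
  filter_upwards [hall] with a ha
  exact hbasis.dense_iff.2 fun V hV _ => ha V hV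

/-- One half of the Kuratowski–Ulam theorem. -/
lemma eventually_residual_prodMk_preimage_mem_residual {S : Set (α × β)}
    (hS : S ∈ residual (α × β)) : ∀ᶠ a in residual α, Prod.mk a ⁻¹' S ∈ residual β := by
  obtain ⟨T, hTo, hTd, hTc, hTS⟩ := mem_residual_iff.1 hS
  have hall : ∀ᶠ a in residual α, ∀ U ∈ T, Dense (Prod.mk a ⁻¹' U) :=
    (eventually_countable_ball hTc).2 fun U hU =>
      eventually_residual_dense_prodMk_preimage (hTo U hU) (hTd U hU)
  filter_upwards [hall] with a ha
  refine mem_residual_iff.2 ⟨(Prod.mk a ⁻¹' ·) '' T, ?_, ?_, hTc.image _, ?_⟩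
  · rintro _ ⟨U, hU, rfl⟩
    exact (hTo U hU).preimage (Continuous.prodMk_right a)
  · rintro _ ⟨U, hU, rfl⟩
    exact ha U hU
  · exact fun b hb => hTS fun U hU => hb _ ⟨U, hU, rfl⟩

end KuratowskiUlam

@[simp]
lemma glue_apply_fin (k : ℕ) (x : Fin k → ℕ → Bool) (y : ℕ → ℕ → Bool) (i : Fin k) :
    glue k x y i = x i := by
  simp [glue]

def glueHomeo (k : ℕ) : ((Fin k → ℕ → Bool) × (ℕ → ℕ → Bool)) ≃ₜ (ℕ → ℕ → Bool) where
  toFun p := glue k p.1 p.2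
  invFun u := (fun i => u i, fun n => u (n + k))
  left_inv p := by
    ext <;> simp [glue]
  right_inv u := by
    funext n
    by_cases h : n < k
    · simp [glue, h]
    · simp [glue, h, Nat.sub_add_cancel (not_lt.1 h)]
  continuous_toFun := by
    refine continuous_pi fun n => ?_
    by_cases h : n < k <;> simp only [glue, h, dite_true, dite_false] <;> fun_prop

lemma glue_E0_of_E0 {k : ℕ} {x x' : Fin k → ℕ → Bool} (hx : ∀ i, E0 (x i) (x' i))
    (z : ℕ → ℕ → Bool) (n : ℕ) : E0 (glue k x z n) (glue k x' z n) := by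
  by_cases h : n < k
  · simpa only [glue, h, dite_true] using hx ⟨n, h⟩
  · simp only [glue, h, dite_false]
    exact ⟨0, fun _ _ => rfl⟩

theorem extends_E0k_on_comeager_general (E : (ℕ → ℕ → Bool) → (ℕ → ℕ → Bool) → Prop)
    (hEquiv : Equivalence E)
    (hExt : ∀ x y : ℕ → ℕ → Bool, (∀ n, E0 (x n) (y n)) → E x y)
    (k : ℕ)
    (hComeager :
      {p : (Fin k → ℕ → Bool) × (ℕ → ℕ → Bool) × (ℕ → ℕ → Bool) |
        E (glue k p.1 p.2.1) (glue k p.1 p.2.2)} ∈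
        residual ((Fin k → ℕ → Bool) × (ℕ → ℕ → Bool) × (ℕ → ℕ → Bool))) :
    ∃ C ∈ residual (ℕ → ℕ → Bool), ∀ u ∈ C, ∀ v ∈ C,
      (∀ i < k, E0 (u i) (v i)) → E u v := by
  have hS : {p : (ℕ → ℕ → Bool) × (ℕ → ℕ → Bool) | E p.1 (glue k (fun i => p.1 i) p.2)} ∈
      residual _ := by
    rw [← ((Homeomorph.prodAssoc _ _ _).symm.trans
      ((glueHomeo k).prodCongr (Homeomorph.refl _))).residual_map_eq, mem_map]
    convert hComeager using 2 with ⟨x, y, z⟩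
    simp [glueHomeo, Homeomorph.prodAssoc]
  refine ⟨_, eventually_residual_prodMk_preimage_mem_residual hS, fun u hu v hv huv => ?_⟩
  obtain ⟨z, hzu, hzv⟩ := (dense_of_mem_residual (inter_mem hu hv)).nonempty
  have hmid : E (glue k (fun i => u i) z) (glue k (fun i => v i) z) :=
    hExt _ _ (glue_E0_of_E0 (fun i => huv i i.isLt) z)
  exact hEquiv.trans hzu (hEquiv.trans hmid (hEquiv.symm hzv))

/-- If `E` is an equivalence relation on `(2^ℕ)^ℕ` extending `E₀^ℕ`, invariant under the
coordinatewise finite-flip action of `(⊕ℤ₂)^ℕ`, and for some `k`, for comeager many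
`(x,y,z) ∈ (2^ℕ)^k × (2^ℕ)^{ℕ∖k} × (2^ℕ)^{ℕ∖k}` one has `(x,y) E (x,z)`, then `E` extends
`E₀^k` on a comeager set. -/
theorem extends_E0k_on_comeager (E : (ℕ → ℕ → Bool) → (ℕ → ℕ → Bool) → Prop)
    (hEquiv : Equivalence E)
    (hExt : ∀ x y : ℕ → ℕ → Bool, (∀ n, E0 (x n) (y n)) → E x y)
    (hInv : ∀ g : ℕ → ℕ → Bool, (∀ n, {i | g n i = true}.Finite) →
      ∀ x y : ℕ → ℕ → Bool, E x y →
        E (fun n i => xor (g n i) (x n i)) (fun n i => xor (g n i) (y n i)))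
    (k : ℕ)
    (hComeager :
      {p : (Fin k → ℕ → Bool) × (ℕ → ℕ → Bool) × (ℕ → ℕ → Bool) |
        E (glue k p.1 p.2.1) (glue k p.1 p.2.2)} ∈
        residual ((Fin k → ℕ → Bool) × (ℕ → ℕ → Bool) × (ℕ → ℕ → Bool))) :
    ∃ C ∈ residual (ℕ → ℕ → Bool), ∀ u ∈ C, ∀ v ∈ C,
      (∀ i < k, E0 (u i) (v i)) → E u v :=
  extends_E0k_on_comeager_general E hEquiv hExt k hComeager
end

section
/- For every comeager set C ⊆ (2^ℕ)^ℕ, E₀^ℕ is Borel reducible to the restriction E₀^ℕ↾C. -/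
/-- `E₀^ℕ` on `(2^ℕ)^ℕ`. -/
def E0N (x y : ℕ → ℕ → Bool) : Prop := ∀ n, E0 (x n) (y n)

/-!
A comeager set contains `⋂ n, D n` for dense open sets `D n`. We build a "template": in each row
`k` a sequence of fixed bits interrupted by infinitely many free slots. The map sending `x` to the
point that carries row `k` of `x`, in order, in the free slots of row `k` is a continuous
reduction of `E₀^ℕ` to itself, because in each row the `m`-th free slot tends to infinity with `m`.

The template is the limit of finite approximations. At stage `n` only finitely many free slots
have been opened, so they can be filled in finitely many ways; treating these fillings one at a
time, each time appending fixed bits that force a basic neighbourhood of a point of `D n`, every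
completion of the stage lands in `D n`. Opening one new free slot in each row `k ≤ n` afterwards
makes every row receive infinitely many of them.
-/

open Set Topology

theorem exists_seq_isOpen_dense_iInter_subset {X : Type*} [TopologicalSpace X] {C : Set X}
    (hC : C ∈ residual X) :
    ∃ D : ℕ → Set X, (∀ n, IsOpen (D n)) ∧ (∀ n, Dense (D n)) ∧ ⋂ n, D n ⊆ C := by
  obtain ⟨S, hSo, hSd, hSc, hSC⟩ := mem_residual_iff.mp hC
  obtain ⟨D, hD⟩ := (hSc.insert univ).exists_eq_range (insert_nonempty univ S)
  have hmem : ∀ n, D n = univ ∨ D n ∈ S := fun n => by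
    rw [← mem_insert_iff, hD]
    exact mem_range_self n
  refine ⟨D, fun n => ?_, fun n => ?_, ?_⟩
  · rcases hmem n with h | h
    · exact h ▸ isOpen_univ
    · exact hSo _ h
  · rcases hmem n with h | h
    · exact h ▸ dense_univ
    · exact hSd _ h
  · rwa [← sInter_range, ← hD, sInter_insert, univ_inter]

theorem List.IsPrefix.getElem?_eq {α : Type*} {l₁ l₂ : List α} (h : l₁ <+: l₂) {i : ℕ}
    (hi : i < l₁.length) : l₂[i]? = l₁[i]? := by
  obtain ⟨u, rfl⟩ := h
  exact List.getElem?_append_left hi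

section Spread

/-- Row `k` of `x` is copied, in order, into the free slots `j` (those with `s k j = none`) of
row `k`. -/
def spread (s : ℕ → ℕ → Option Bool) (x : ℕ → ℕ → Bool) : ℕ → ℕ → Bool :=
  fun k j => (s k j).getD (x k (Nat.count (fun i => s k i = none) j))

variable {s : ℕ → ℕ → Option Bool}

theorem continuous_spread : Continuous (spread s) := by
  refine continuous_pi fun k => continuous_pi fun j => ?_
  simp only [spread]
  cases s k j with
  | none => exact (continuous_apply _).comp (continuous_apply k)
  | some b => exact continuous_const

theorem spread_nth (hs : {j | s k j = none}.Infinite) (x : ℕ → ℕ → Bool) (m : ℕ) :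
    spread s x k (Nat.nth (fun i => s k i = none) m) = x k m := by
  simp only [spread, Nat.nth_mem_of_infinite hs m, Option.getD_none,
    Nat.count_nth_of_infinite hs]

theorem E0N_spread_iff (hs : ∀ k, {j | s k j = none}.Infinite) {x y : ℕ → ℕ → Bool} :
    E0N (spread s x) (spread s y) ↔ E0N x y := by
  refine forall_congr' fun k => ⟨fun ⟨N, hN⟩ => ⟨N, fun m hm => ?_⟩, fun ⟨N, hN⟩ => ?_⟩
  · rw [← spread_nth (hs k) x, ← spread_nth (hs k) y]
    exact hN _ (hm.trans ((Nat.nth_strictMono (hs k)).id_le m))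
  · refine ⟨Nat.nth (fun i => s k i = none) N, fun j hj => ?_⟩
    have hcount : N ≤ Nat.count (fun i => s k i = none) j :=
      (Nat.count_nth_of_infinite (hs k) N).symm.trans_le (Nat.count_monotone _ hj)
    simp only [spread, hN _ hcount]

end Spread

section SquareCylinder

def squareCylinder (N : ℕ) (y : ℕ → ℕ → Bool) : Set (ℕ → ℕ → Bool) :=
  (Iio N).pi fun k => (Iio N).pi fun j => {y k j}

variable {N : ℕ} {y z : ℕ → ℕ → Bool}

theorem mem_squareCylinder : z ∈ squareCylinder N y ↔ ∀ k < N, ∀ j < N, z k j = y k j := by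
  simp [squareCylinder]

theorem mem_squareCylinder_self : y ∈ squareCylinder N y :=
  mem_squareCylinder.2 fun _ _ _ _ => rfl

theorem isOpen_squareCylinder : IsOpen (squareCylinder N y) :=
  isOpen_set_pi (finite_Iio N) fun _ _ => isOpen_set_pi (finite_Iio N) fun _ _ => isOpen_discrete _

theorem isClosed_squareCylinder : IsClosed (squareCylinder N y) :=
  isClosed_set_pi fun _ _ => isClosed_set_pi fun _ _ => isClosed_discrete _

theorem squareCylinder_antitone : Antitone fun N => squareCylinder N y :=
  fun _ _ hNM _ hz => mem_squareCylinder.2 fun k hk j hj =>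
    mem_squareCylinder.1 hz k (hk.trans_le hNM) j (hj.trans_le hNM)

theorem iInter_squareCylinder : ⋂ N, squareCylinder N y = {y} := by
  refine eq_singleton_iff_unique_mem.2
    ⟨mem_iInter.2 fun _ => mem_squareCylinder_self, fun z hz => funext fun k => funext fun j => ?_⟩
  exact mem_squareCylinder.1 (mem_iInter.1 hz (max k j + 1)) k (by omega) j (by omega)

theorem exists_squareCylinder_subset {U : Set (ℕ → ℕ → Bool)} (hU : U ∈ 𝓝 y) :
    ∃ N, squareCylinder N y ⊆ U :=
  exists_subset_nhds_of_isCompact squareCylinder_antitone.directed_ge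
    (fun _ => isClosed_squareCylinder.isCompact) (by simpa [iInter_squareCylinder] using hU)

end SquareCylinder

/-- A finite approximation of the reduction: in row `k`, the entry `some b` at position `j` fixes
the output bit at `(k, j)` to `b`, while `none` marks a free slot, to be filled by the input. -/
abbrev Template := ℕ → List (Option Bool)

namespace Template

variable {t t₁ t₂ : Template} {σ z : ℕ → ℕ → Bool} {k j : ℕ}

def cylinder (t : Template) : Set (ℕ → ℕ → Bool) :=
  {z | ∀ k j b, (t k)[j]? = some (some b) → z k j = b}

def IsFree (t : Template) (k j : ℕ) : Prop := (t k)[j]? = some none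

def IsBounded (t : Template) : Prop := ∃ N, ∀ k j, j < (t k).length → k < N ∧ j < N

def AgreeOnFree (t : Template) (σ z : ℕ → ℕ → Bool) : Prop := ∀ k j, t.IsFree k j → z k j = σ k j

def Extends (t t' : Template) : Prop := ∀ k, t k <+: t' k

def ExtendsByFixed (t t' : Template) : Prop := t.Extends t' ∧ ∀ k j, t'.IsFree k j → t.IsFree k j

theorem Extends.refl (t : Template) : t.Extends t := fun _ => List.prefix_refl _

theorem Extends.trans (h₁ : t.Extends t₁) (h₂ : t₁.Extends t₂) : t.Extends t₂ :=
  fun k => (h₁ k).trans (h₂ k)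

theorem ExtendsByFixed.refl (t : Template) : t.ExtendsByFixed t := ⟨.refl t, fun _ _ => id⟩

theorem ExtendsByFixed.trans (h₁ : t.ExtendsByFixed t₁) (h₂ : t₁.ExtendsByFixed t₂) :
    t.ExtendsByFixed t₂ :=
  ⟨h₁.1.trans h₂.1, fun k j h => h₁.2 k j (h₂.2 k j h)⟩

theorem IsFree.lt_length (h : t.IsFree k j) : j < (t k).length :=
  (List.getElem?_eq_some_iff.1 h).1

theorem cylinder_anti (h : t₁.Extends t₂) : t₂.cylinder ⊆ t₁.cylinder :=
  fun _ hz k j b hb => hz k j b <| by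
    rw [(h k).getElem?_eq (List.getElem?_eq_some_iff.1 hb).1, hb]

def fill (t : Template) (σ : ℕ → ℕ → Bool) : ℕ → ℕ → Bool :=
  fun k j => ((t k)[j]?.join).getD (σ k j)

theorem eq_fill_of_agreeOnFree (hz : z ∈ t.cylinder) (hσ : t.AgreeOnFree σ z)
    (hj : j < (t k).length) : z k j = t.fill σ k j := by
  have hget := List.getElem?_eq_getElem hj
  cases h : (t k)[j] with
  | none => simpa [fill, hget, h] using hσ k j (by simp [IsFree, hget, h])
  | some b => simpa [fill, hget, h] using hz k j b (by simp [hget, h])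

def pad (t : Template) (M : ℕ) (y : ℕ → ℕ → Bool) : Template := fun k =>
  t k ++ if k < M then (List.range' (t k).length M).map fun j => some (y k j) else []

theorem extendsByFixed_pad (M : ℕ) (y : ℕ → ℕ → Bool) : t.ExtendsByFixed (t.pad M y) := by
  refine ⟨fun k => List.prefix_append _ _, fun k j h => ?_⟩
  simp only [IsFree, pad, List.getElem?_append] at h ⊢
  split_ifs at h
  · exact h
  all_goals simp at h

theorem IsBounded.append (ht : t.IsBounded) {u : Template} {M : ℕ}
    (hu : ∀ k, (u k).length ≤ if k < M then M else 0) : IsBounded fun k => t k ++ u k := by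
  obtain ⟨N, hN⟩ := ht
  refine ⟨N + M, fun k j hj => ?_⟩
  have huk := hu k
  rw [List.length_append] at hj
  split_ifs at huk
  · rcases Nat.eq_zero_or_pos (t k).length with h | h
    · omega
    · have := hN k _ (Nat.sub_lt h one_pos)
      omega
  · have := hN k j (by omega)
    omega

theorem IsBounded.pad (ht : t.IsBounded) (M : ℕ) (y : ℕ → ℕ → Bool) : (t.pad M y).IsBounded :=
  ht.append (M := M) fun k => by split_ifs <;> simp

theorem eq_of_mem_cylinder_pad {M : ℕ} {y : ℕ → ℕ → Bool} (hz : z ∈ (t.pad M y).cylinder)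
    (hk : k < M) (hj : (t k).length ≤ j) (hjM : j < (t k).length + M) : z k j = y k j := by
  refine hz k j _ ?_
  rw [pad, if_pos hk, List.getElem?_append_right hj, List.getElem?_map,
    List.getElem?_range' (by omega)]
  simp [Nat.add_sub_cancel' hj]

section Absorb

variable {D : Set (ℕ → ℕ → Bool)}

theorem exists_extendsByFixed_mem_of_agreeOnFree (ht : t.IsBounded) (hD : IsOpen D)
    (hDd : Dense D) (σ : ℕ → ℕ → Bool) :
    ∃ t', t.ExtendsByFixed t' ∧ t'.IsBounded ∧ ∀ z ∈ t'.cylinder, t.AgreeOnFree σ z → z ∈ D := by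
  obtain ⟨N, hN⟩ := id ht
  obtain ⟨y, hy, hyD⟩ := hDd.inter_open_nonempty _ isOpen_squareCylinder
    ⟨t.fill σ, mem_squareCylinder_self (N := N)⟩
  obtain ⟨M, hM⟩ := exists_squareCylinder_subset (hD.mem_nhds hyD)
  refine ⟨t.pad M y, extendsByFixed_pad M y, ht.pad M y, fun z hz hσ => hM ?_⟩
  refine mem_squareCylinder.2 fun k hk j hj => ?_
  by_cases hjt : j < (t k).length
  · obtain ⟨hkN, hjN⟩ := hN k j hjt
    rw [eq_fill_of_agreeOnFree (cylinder_anti (extendsByFixed_pad M y).1 hz) hσ hjt,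
      mem_squareCylinder.1 hy k hkN j hjN]
  · exact eq_of_mem_cylinder_pad hz hk (not_lt.1 hjt) (by omega)

theorem exists_extendsByFixed_mem_of_agreeOnFree_finset (ht : t.IsBounded) (hD : IsOpen D)
    (hDd : Dense D) (S : Finset (ℕ → ℕ → Bool)) :
    ∃ t', t.ExtendsByFixed t' ∧ t'.IsBounded ∧
      ∀ z ∈ t'.cylinder, ∀ σ ∈ S, t.AgreeOnFree σ z → z ∈ D := by
  classical
  induction S using Finset.induction_on with
  | empty => exact ⟨t, .refl t, ht, by simp⟩
  | insert σ S _ ih =>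
    obtain ⟨t₁, h₁, ht₁, hS⟩ := ih
    obtain ⟨t₂, h₂, ht₂, hσ⟩ := exists_extendsByFixed_mem_of_agreeOnFree ht₁ hD hDd σ
    refine ⟨t₂, h₁.trans h₂, ht₂, fun z hz τ hτ hagree => ?_⟩
    rcases Finset.mem_insert.1 hτ with rfl | hτ
    · exact hσ z hz fun k j h => hagree k j (h₁.2 k j h)
    · exact hS z (cylinder_anti h₂.1 hz) τ hτ hagree

theorem exists_extendsByFixed_cylinder_subset (ht : t.IsBounded) (hD : IsOpen D) (hDd : Dense D) :
    ∃ t', t.ExtendsByFixed t' ∧ t'.IsBounded ∧ t'.cylinder ⊆ D := by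
  classical
  obtain ⟨N, hN⟩ := id ht
  -- the free slots of `t` lie in `[0, N) × [0, N)`, so finitely many fillings cover them all
  let extend (a : Fin N → Fin N → Bool) : ℕ → ℕ → Bool := fun k j =>
    if h : k < N ∧ j < N then a ⟨k, h.1⟩ ⟨j, h.2⟩ else false
  obtain ⟨t', h, ht', hD'⟩ :=
    exists_extendsByFixed_mem_of_agreeOnFree_finset ht hD hDd (Finset.univ.image extend)
  refine ⟨t', h, ht', fun z hz => hD' z hz (extend fun k j => z k j) (by simp) fun k j hkj => ?_⟩
  simp [extend, hN k j hkj.lt_length]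

open Classical in
/-- Junk value `t` when no such extension exists; it does exist when `t` is bounded and `U` is
dense open (`exists_extendsByFixed_cylinder_subset`). -/
noncomputable def absorb (t : Template) (U : Set (ℕ → ℕ → Bool)) : Template :=
  if h : ∃ t', t.ExtendsByFixed t' ∧ t'.IsBounded ∧ t'.cylinder ⊆ U then h.choose else t

theorem extendsByFixed_absorb (t : Template) (U : Set (ℕ → ℕ → Bool)) :
    t.ExtendsByFixed (t.absorb U) := by
  unfold absorb
  split_ifs with h
  exacts [h.choose_spec.1, .refl t]

theorem IsBounded.absorb (ht : t.IsBounded) (U : Set (ℕ → ℕ → Bool)) : (t.absorb U).IsBounded := by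
  unfold Template.absorb
  split_ifs with h
  exacts [h.choose_spec.2.1, ht]

theorem cylinder_absorb_subset (ht : t.IsBounded) (hD : IsOpen D) (hDd : Dense D) :
    (t.absorb D).cylinder ⊆ D := by
  rw [absorb, dif_pos (exists_extendsByFixed_cylinder_subset ht hD hDd)]
  exact (exists_extendsByFixed_cylinder_subset ht hD hDd).choose_spec.2.2

def addFree (t : Template) (n : ℕ) : Template := fun k => t k ++ if k ≤ n then [none] else []

theorem extends_addFree (t : Template) (n : ℕ) : t.Extends (t.addFree n) :=
  fun _ => List.prefix_append _ _

theorem isFree_addFree (hk : k ≤ n) : (t.addFree n).IsFree k (t k).length := by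
  simp [IsFree, addFree, hk]

theorem IsBounded.addFree (ht : t.IsBounded) (n : ℕ) : (t.addFree n).IsBounded :=
  ht.append (M := n + 1) fun k => by split_ifs <;> simp; omega

end Absorb

section Stage

variable (D : ℕ → Set (ℕ → ℕ → Bool)) {k j n m : ℕ}

noncomputable def stage : ℕ → Template
  | 0 => fun _ => []
  | n + 1 => ((stage n).absorb (D n)).addFree n

theorem isBounded_stage : ∀ n, (stage D n).IsBounded
  | 0 => ⟨0, by simp [stage]⟩
  | n + 1 => ((isBounded_stage n).absorb _).addFree n

theorem extends_stage_succ (n : ℕ) : (stage D n).Extends (stage D (n + 1)) :=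
  (extendsByFixed_absorb _ _).1.trans (extends_addFree _ _)

theorem stage_mono (h : n ≤ m) : (stage D n).Extends (stage D m) := by
  induction m, h using Nat.le_induction with
  | base => exact .refl _
  | succ m _ ih => exact ih.trans (extends_stage_succ D m)

theorem cylinder_stage_succ_subset (hD : ∀ n, IsOpen (D n)) (hDd : ∀ n, Dense (D n)) (n : ℕ) :
    (stage D (n + 1)).cylinder ⊆ D n :=
  (cylinder_anti (extends_addFree _ n)).trans
    (cylinder_absorb_subset (isBounded_stage D n) (hD n) (hDd n))

theorem exists_isFree_stage_succ (hk : k ≤ n) :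
    ∃ j, (stage D n k).length ≤ j ∧ (stage D (n + 1)).IsFree k j :=
  ⟨_, ((extendsByFixed_absorb _ _).1 k).length_le, isFree_addFree hk⟩

theorem sub_le_length_stage : ∀ n, n - k ≤ (stage D n k).length
  | 0 => by simp
  | n + 1 => by
    rcases le_or_gt k n with hk | hk
    · obtain ⟨j, hj, hfree⟩ := exists_isFree_stage_succ D hk
      have := sub_le_length_stage n
      have := hfree.lt_length
      omega
    · omega

/-- The infinite template approximated by the stages: row `k` of `stage D n` has length at least
`n - k`, so position `j` is decided at stage `k + j + 1`. -/
noncomputable def limit (k j : ℕ) : Option Bool := ((stage D (k + j + 1) k)[j]?).join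

theorem getElem?_stage_eq_limit (hj : j < (stage D n k).length) :
    (stage D n k)[j]? = some (limit D k j) := by
  have hj' : j < (stage D (k + j + 1) k).length := by
    have := sub_le_length_stage D (k := k) (k + j + 1)
    omega
  rcases le_total n (k + j + 1) with h | h
  · rw [limit, (stage_mono D h k).getElem?_eq hj, List.getElem?_eq_getElem hj]
    rfl
  · rw [limit, (stage_mono D h k).getElem?_eq hj', List.getElem?_eq_getElem hj']
    rfl

theorem infinite_setOf_limit_eq_none (k : ℕ) : {j | limit D k j = none}.Infinite := by
  refine infinite_of_forall_exists_gt fun B => ?_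
  obtain ⟨j, hj, hfree⟩ := exists_isFree_stage_succ D (k := k) (n := k + B + 1) (by omega)
  have hB := sub_le_length_stage D (k := k) (k + B + 1)
  refine ⟨j, ?_, by omega⟩
  exact Option.some_injective _ ((getElem?_stage_eq_limit D hfree.lt_length).symm.trans hfree)

theorem spread_limit_mem_cylinder (x : ℕ → ℕ → Bool) (n : ℕ) :
    spread (limit D) x ∈ (stage D n).cylinder := by
  intro k j b hb
  rw [getElem?_stage_eq_limit D (List.getElem?_eq_some_iff.1 hb).1, Option.some_inj] at hb
  simp [spread, hb]

end Stage

end Template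

/-- For every comeager `C ⊆ (2^ℕ)^ℕ`, `E₀^ℕ` is Borel reducible to `E₀^ℕ ↾ C`. -/
theorem E0N_reducible_to_restriction (C : Set (ℕ → ℕ → Bool))
    (hC : C ∈ residual (ℕ → ℕ → Bool)) :
    ∃ g : (ℕ → ℕ → Bool) → (ℕ → ℕ → Bool), Measurable g ∧ (∀ x, g x ∈ C) ∧
      ∀ x y, E0N x y ↔ E0N (g x) (g y) := by
  obtain ⟨D, hD, hDd, hDC⟩ := exists_seq_isOpen_dense_iInter_subset hC
  refine ⟨spread (Template.limit D), continuous_spread.measurable, fun x => hDC ?_,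
    fun x y => (E0N_spread_iff (Template.infinite_setOf_limit_eq_none D)).symm⟩
  exact mem_iInter.2 fun n =>
    Template.cylinder_stage_succ_subset D hD hDd n (Template.spread_limit_mem_cylinder D x _)
end
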